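/- arXiv:1602.07415 — 3 statements merged into one kernel-verified Lean document; each statement's English description precedes it below -/
import Mathlib

section
/- Let π be a distribution over states assigning values to variables indexed by a finite set I, with total influence α. If X and Y are coupled random states, then for any variable i, E[ ‖π_i(·|X) − π_i(·|Y)‖_TV ] ≤ α · max_j P(X_j ≠ Y_j), where π_i(·|X) denotes the conditional distribution of variable i in π given the values of all other variables in state X. -/
noncomputable def tvDist {Ω : Type*} [Fintype Ω] (μ ν : Ω → ℝ) : ℝ :=
  ⨆ A : Finset Ω, |∑ x ∈ A, μ x - ∑ x ∈ A, ν x|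

def IsDist {Ω : Type*} [Fintype Ω] (μ : Ω → ℝ) : Prop :=
  (∀ x, 0 ≤ μ x) ∧ ∑ x, μ x = 1

def IsCoupling {Ω₁ Ω₂ : Type*} [Fintype Ω₁] [Fintype Ω₂]
    (q : Ω₁ × Ω₂ → ℝ) (μ : Ω₁ → ℝ) (ν : Ω₂ → ℝ) : Prop :=
  (∀ z, 0 ≤ q z) ∧ (∀ x, ∑ y, q (x, y) = μ x) ∧ (∀ y, ∑ x, q (x, y) = ν y)

/-- Conditional distribution of variable `i` under `π` given the other variables in state `x`. -/
noncomputable def condDist {I S : Type*} [Fintype I] [Fintype S] [DecidableEq I]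
    (π : (I → S) → ℝ) (i : I) (x : I → S) : S → ℝ :=
  fun s => π (Function.update x i s) / ∑ s' : S, π (Function.update x i s')

/-- The total influence `α` of `π` (the Dobrushin influence parameter). -/
noncomputable def totalInfluence {I S : Type*} [Fintype I] [Fintype S] [DecidableEq I]
    (π : (I → S) → ℝ) : ℝ :=
  ⨆ i : I, ∑ j : I,
    ⨆ p : {p : (I → S) × (I → S) // ∀ k, k ≠ j → p.1 k = p.2 k},
      tvDist (condDist π i p.1.1) (condDist π i p.1.2)

section Aux

variable {Ω : Type*} [Fintype Ω]

lemma tvDist_bdd (μ ν : Ω → ℝ) :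
    BddAbove (Set.range fun A : Finset Ω => |∑ x ∈ A, μ x - ∑ x ∈ A, ν x|) :=
  (Set.finite_range _).bddAbove

lemma tvDist_nonneg (μ ν : Ω → ℝ) : 0 ≤ tvDist μ ν := by
  have h := le_ciSup (tvDist_bdd μ ν) (∅ : Finset Ω)
  simpa [tvDist] using h

lemma tvDist_self (μ : Ω → ℝ) : tvDist μ μ = 0 := by
  simp [tvDist, ciSup_const]

lemma tvDist_triangle (μ ν ρ : Ω → ℝ) : tvDist μ ρ ≤ tvDist μ ν + tvDist ν ρ := by
  simp only [tvDist]
  refine ciSup_le fun A => ?_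
  calc |∑ x ∈ A, μ x - ∑ x ∈ A, ρ x|
      ≤ |∑ x ∈ A, μ x - ∑ x ∈ A, ν x| + |∑ x ∈ A, ν x - ∑ x ∈ A, ρ x| := abs_sub_le _ _ _
    _ ≤ _ := add_le_add (le_ciSup (tvDist_bdd μ ν) A) (le_ciSup (tvDist_bdd ν ρ) A)

end Aux

lemma hybrid_bound {I S : Type*} [Fintype I] [Fintype S] [DecidableEq I] [DecidableEq S]
    (π : (I → S) → ℝ) (i : I) :
    ∀ (n : ℕ) (x y : I → S), (Finset.univ.filter fun j => x j ≠ y j).card = n →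
      tvDist (condDist π i x) (condDist π i y) ≤
        ∑ j ∈ Finset.univ.filter (fun j => x j ≠ y j),
          ⨆ p : {p : (I → S) × (I → S) // ∀ k, k ≠ j → p.1 k = p.2 k},
            tvDist (condDist π i p.1.1) (condDist π i p.1.2) := by
  intro n
  induction n with
  | zero =>
    intro x y h
    have hxy : x = y := by
      funext k
      by_contra hk
      have hmem : k ∈ Finset.univ.filter fun j => x j ≠ y j := by simp [hk]
      rw [Finset.card_eq_zero.mp h] at hmem
      simp at hmem
    subst hxy
    simp [tvDist_self]
  | succ n ih =>
    intro x y h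
    have hcpos : 0 < (Finset.univ.filter fun k => x k ≠ y k).card := by omega
    obtain ⟨j, hj⟩ := Finset.card_pos.mp hcpos
    set x' := Function.update x j (y j) with hx'
    have hset : (Finset.univ.filter fun k => x' k ≠ y k) =
        (Finset.univ.filter fun k => x k ≠ y k).erase j := by
      ext k
      by_cases hk : k = j
      · subst hk
        simp [x', Function.update_self]
      · simp [x', Function.update_of_ne hk, hk]
    have hcard : (Finset.univ.filter fun k => x' k ≠ y k).card = n := by
      rw [hset, Finset.card_erase_of_mem hj, h]
      omega
    have h1 : tvDist (condDist π i x) (condDist π i x') ≤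
        ⨆ p : {p : (I → S) × (I → S) // ∀ k, k ≠ j → p.1 k = p.2 k},
          tvDist (condDist π i p.1.1) (condDist π i p.1.2) :=
      le_ciSup (f := fun p : {p : (I → S) × (I → S) // ∀ k, k ≠ j → p.1 k = p.2 k} =>
          tvDist (condDist π i p.1.1) (condDist π i p.1.2))
        ((Set.finite_range _).bddAbove)
        ⟨(x, x'), fun k hk => (Function.update_of_ne hk _ _).symm⟩
    have h2 := ih x' y hcard
    rw [hset] at h2
    calc tvDist (condDist π i x) (condDist π i y)
        ≤ tvDist (condDist π i x) (condDist π i x') +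
            tvDist (condDist π i x') (condDist π i y) := tvDist_triangle _ _ _
      _ ≤ (⨆ p : {p : (I → S) × (I → S) // ∀ k, k ≠ j → p.1 k = p.2 k},
            tvDist (condDist π i p.1.1) (condDist π i p.1.2)) +
          ∑ k ∈ (Finset.univ.filter fun k => x k ≠ y k).erase j,
            ⨆ p : {p : (I → S) × (I → S) // ∀ l, l ≠ k → p.1 l = p.2 l},
              tvDist (condDist π i p.1.1) (condDist π i p.1.2) := add_le_add h1 h2
      _ = _ := Finset.add_sum_erase _
          (fun k => ⨆ p : {p : (I → S) × (I → S) // ∀ l, l ≠ k → p.1 l = p.2 l},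
            tvDist (condDist π i p.1.1) (condDist π i p.1.2)) hj

/-- for any coupling `q` of the distributions of states `X` and `Y`,
`E[‖π_i(·|X) − π_i(·|Y)‖_TV] ≤ α ⋅ max_j P(X_j ≠ Y_j)`. -/
theorem exp_tvDist_condDist_le {I S : Type*} [Fintype I] [Fintype S]
    [DecidableEq I] [DecidableEq S] [Nonempty I]
    (π : (I → S) → ℝ) (hpos : ∀ x, 0 < π x)
    (μ ν : (I → S) → ℝ) (hμ : IsDist μ) (hν : IsDist ν)
    (q : (I → S) × (I → S) → ℝ) (hq : IsCoupling q μ ν) (i : I) :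
    ∑ z : (I → S) × (I → S), q z * tvDist (condDist π i z.1) (condDist π i z.2) ≤
      totalInfluence π *
        ⨆ j : I, ∑ z ∈ Finset.univ.filter
            (fun z : (I → S) × (I → S) => z.1 j ≠ z.2 j), q z := by
  classical
  rcases isEmpty_or_nonempty S with hS | hS
  · obtain ⟨i0⟩ := ‹Nonempty I›
    have hIS : IsEmpty (I → S) := ⟨fun f => hS.false (f i0)⟩
    have h1 : ∀ j : I,
        (Finset.univ.filter (fun z : (I → S) × (I → S) => z.1 j ≠ z.2 j)) = ∅ :=
      fun j => Finset.eq_empty_of_isEmpty _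
    simp [Finset.univ_eq_empty, h1, ciSup_const]
  · -- notation
    set b : I → ℝ := fun j =>
      ⨆ p : {p : (I → S) × (I → S) // ∀ k, k ≠ j → p.1 k = p.2 k},
        tvDist (condDist π i p.1.1) (condDist π i p.1.2) with hbdef
    obtain ⟨x₀⟩ : Nonempty (I → S) := inferInstance
    have hbnn : ∀ j, 0 ≤ b j := by
      intro j
      have h := le_ciSup (f := fun p : {p : (I → S) × (I → S) // ∀ k, k ≠ j → p.1 k = p.2 k} =>
          tvDist (condDist π i p.1.1) (condDist π i p.1.2))
        ((Set.finite_range _).bddAbove)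
        ⟨(x₀, x₀), fun _ _ => rfl⟩
      simpa [hbdef, tvDist_self] using h
    set M : ℝ := ⨆ j : I, ∑ z ∈ Finset.univ.filter
        (fun z : (I → S) × (I → S) => z.1 j ≠ z.2 j), q z with hMdef
    have hPM : ∀ j : I,
        ∑ z ∈ Finset.univ.filter (fun z : (I → S) × (I → S) => z.1 j ≠ z.2 j), q z ≤ M :=
      fun j => le_ciSup (f := fun j : I => ∑ z ∈ Finset.univ.filter
        (fun z : (I → S) × (I → S) => z.1 j ≠ z.2 j), q z)
        ((Set.finite_range _).bddAbove) j
    have hMnn : 0 ≤ M := by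
      obtain ⟨j0⟩ := ‹Nonempty I›
      exact le_trans (Finset.sum_nonneg fun z _ => hq.1 z) (hPM j0)
    have hbα : ∑ j : I, b j ≤ totalInfluence π := by
      simp only [totalInfluence, hbdef]
      exact le_ciSup (f := fun i : I => ∑ j : I,
          ⨆ p : {p : (I → S) × (I → S) // ∀ k, k ≠ j → p.1 k = p.2 k},
            tvDist (condDist π i p.1.1) (condDist π i p.1.2))
        ((Set.finite_range _).bddAbove) i
    calc ∑ z : (I → S) × (I → S), q z * tvDist (condDist π i z.1) (condDist π i z.2)
        ≤ ∑ z : (I → S) × (I → S),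
            q z * ∑ j ∈ Finset.univ.filter (fun j => z.1 j ≠ z.2 j), b j :=
          Finset.sum_le_sum fun z _ =>
            mul_le_mul_of_nonneg_left (hybrid_bound π i _ z.1 z.2 rfl) (hq.1 z)
      _ = ∑ j : I, b j *
            ∑ z ∈ Finset.univ.filter (fun z : (I → S) × (I → S) => z.1 j ≠ z.2 j), q z := by
          simp_rw [Finset.sum_filter, Finset.mul_sum]
          rw [Finset.sum_comm]
          refine Finset.sum_congr rfl fun j _ => ?_
          refine Finset.sum_congr rfl fun z _ => ?_
          by_cases hz : z.1 j ≠ z.2 j <;> simp [hz, mul_comm]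
      _ ≤ ∑ j : I, b j * M :=
          Finset.sum_le_sum fun j _ => mul_le_mul_of_nonneg_left (hPM j) (hbnn j)
      _ = (∑ j : I, b j) * M := (Finset.sum_mul _ _ _).symm
      _ ≤ totalInfluence π * M := mul_le_mul_of_nonneg_right hbα hMnn
end

section
/- For sequential Gibbs sampling on an n-variable distribution π satisfying Dobrushin's condition α < 1, the ω-sparse estimation time satisfies t_{SE(ω)}(ε) ≤ ⌈(n/(1−α))·log(ω/ε)⌉: for t at least this value and any initial distribution μ_0, ‖P^{(t)} μ_0 − π‖_{SV(ω)} ≤ ε. -/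
def SparseDependsOn {n : ℕ} {S : Type*} [Fintype S] [DecidableEq S]
    (A : Finset (Fin n → S)) (I : Finset (Fin n)) : Prop :=
  ∀ x y : Fin n → S, (∀ i ∈ I, x i = y i) → (x ∈ A ↔ y ∈ A)

noncomputable def svDist {n : ℕ} {S : Type*} [Fintype S] [DecidableEq S]
    (μ ν : (Fin n → S) → ℝ) (ω : ℕ) : ℝ :=
  ⨆ A : {A : Finset (Fin n → S) // ∃ I : Finset (Fin n), I.card ≤ ω ∧ SparseDependsOn A I},
    |∑ x ∈ A.1, μ x - ∑ x ∈ A.1, ν x|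

noncomputable def gibbsKernel {I S : Type*} [Fintype I] [Fintype S]
    [DecidableEq I] [DecidableEq S] (π : (I → S) → ℝ) (x y : I → S) : ℝ :=
  (Fintype.card I : ℝ)⁻¹ *
    ∑ i : I, if ∀ j, j ≠ i → y j = x j then condDist π i x (y i) else 0

noncomputable def evolve {Ω : Type*} [Fintype Ω] (K : Ω → Ω → ℝ) (μ : Ω → ℝ) : Ω → ℝ :=
  fun y => ∑ x, μ x * K x y

noncomputable def iter {Ω : Type*} [Fintype Ω] (K : Ω → Ω → ℝ) (t : ℕ) (μ : Ω → ℝ) : Ω → ℝ :=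
  (evolve K)^[t] μ

/-!
Dobrushin's contraction argument, run on test functions. For `g` on configurations let
`osc j g` be its oscillation in coordinate `j` and `totalOsc g = ∑ j, osc j g`. The sampler
acts on functions by `P g = n⁻¹ ∑ i, heatBath π i g`. Resampling site `i ≠ j` turns a change
of coordinate `j` into a change of at most `osc j g`, plus the change of the conditional law at
`i`, which costs `influence π i j * osc i g`; resampling `j` itself erases it. Averaging over
the sites gives `totalOsc (P g) ≤ (1 - (1 - α) / n) * totalOsc g`. As `π` is stationary,
`μₜ(A) - π(A) = μ₀(Pᵗ 1_A) - π(Pᵗ 1_A)`, which is at most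
`totalOsc (Pᵗ 1_A) ≤ (1 - (1 - α) / n)ᵗ * ω` for an event depending on `ω` variables, and the
choice of `t` makes this at most `ε`.
-/

open Finset Matrix

namespace GibbsSampler

section TotalVariation

variable {Ω : Type*} [Fintype Ω]

lemma nonempty_of_isDist {μ : Ω → ℝ} (hμ : IsDist μ) : Nonempty Ω := by
  by_contra h
  rw [not_nonempty_iff] at h
  simpa using hμ.2

lemma abs_sum_sub_sum_le_tvDist (μ ν : Ω → ℝ) (A : Finset Ω) :
    |∑ x ∈ A, μ x - ∑ x ∈ A, ν x| ≤ tvDist μ ν :=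
  le_ciSup (f := fun A : Finset Ω => |∑ x ∈ A, μ x - ∑ x ∈ A, ν x|) (Set.finite_range _).bddAbove A

lemma tvDist_comm (μ ν : Ω → ℝ) : tvDist μ ν = tvDist ν μ := by
  simp only [tvDist, abs_sub_comm]

lemma tvDist_le_one {μ ν : Ω → ℝ} (hμ : IsDist μ) (hν : IsDist ν) : tvDist μ ν ≤ 1 := by
  refine ciSup_le fun A => abs_sub_le_iff.2 ⟨?_, ?_⟩
  · have := sum_le_univ_sum_of_nonneg (s := A) hμ.1
    linarith [sum_nonneg fun x (_ : x ∈ A) => hν.1 x, hμ.2]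
  · have := sum_le_univ_sum_of_nonneg (s := A) hν.1
    linarith [sum_nonneg fun x (_ : x ∈ A) => hμ.1 x, hν.2]

-- Centre `g` at its minimum and keep only the points where `μ ≥ ν`.
lemma dotProduct_sub_dotProduct_le {μ ν : Ω → ℝ} (hμ : IsDist μ) (hν : IsDist ν)
    {g : Ω → ℝ} {b : ℝ} (hg : ∀ x y, g x - g y ≤ b) :
    μ ⬝ᵥ g - ν ⬝ᵥ g ≤ tvDist μ ν * b := by
  classical
  have := nonempty_of_isDist hμ
  obtain ⟨x₀, hx₀⟩ := Finite.exists_min g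
  set A := univ.filter fun x => ν x ≤ μ x
  calc μ ⬝ᵥ g - ν ⬝ᵥ g = ∑ x, (μ x - ν x) * (g x - g x₀) := by
        simp only [dotProduct, sub_mul, mul_sub, sum_sub_distrib, ← sum_mul, hμ.2, hν.2]
        ring
    _ ≤ ∑ x, (if ν x ≤ μ x then μ x - ν x else 0) * b := by
        refine sum_le_sum fun x _ => ?_
        have h₀ := hx₀ x
        have h₁ := hg x x₀
        split_ifs with h <;> nlinarith
    _ = (∑ x ∈ A, μ x - ∑ x ∈ A, ν x) * b := by rw [← sum_mul, ← sum_filter, sum_sub_distrib]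
    _ ≤ tvDist μ ν * b :=
        mul_le_mul_of_nonneg_right ((le_abs_self _).trans (abs_sum_sub_sum_le_tvDist μ ν A))
          ((sub_self (g x₀)).symm.le.trans (hg x₀ x₀))

lemma abs_dotProduct_sub_dotProduct_le {μ ν : Ω → ℝ} (hμ : IsDist μ) (hν : IsDist ν)
    {g : Ω → ℝ} {b : ℝ} (hg : ∀ x y, |g x - g y| ≤ b) :
    |μ ⬝ᵥ g - ν ⬝ᵥ g| ≤ tvDist μ ν * b := by
  have hg' : ∀ x y, g x - g y ≤ b := fun x y => (le_abs_self _).trans (hg x y)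
  refine abs_sub_le_iff.2 ⟨dotProduct_sub_dotProduct_le hμ hν hg', ?_⟩
  rw [tvDist_comm]
  exact dotProduct_sub_dotProduct_le hν hμ hg'

lemma abs_dotProduct_le {μ : Ω → ℝ} (hμ : IsDist μ) {f : Ω → ℝ} {b : ℝ}
    (hf : ∀ x, |f x| ≤ b) : |μ ⬝ᵥ f| ≤ b :=
  calc |μ ⬝ᵥ f| ≤ ∑ x, |μ x * f x| := abs_sum_le_sum_abs _ _
    _ ≤ ∑ x, μ x * b := sum_le_sum fun x _ => by
        rw [abs_mul, abs_of_nonneg (hμ.1 x)]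
        exact mul_le_mul_of_nonneg_left (hf x) (hμ.1 x)
    _ = b := by rw [← sum_mul, hμ.2, one_mul]

end TotalVariation

section Oscillation

variable {I S : Type*}

noncomputable def siteSup (j : I) (F : (I → S) → (I → S) → ℝ) : ℝ :=
  ⨆ p : {p : (I → S) × (I → S) // ∀ k, k ≠ j → p.1 k = p.2 k}, F p.1.1 p.1.2

lemma le_siteSup [Finite I] [Finite S] {j : I} (F : (I → S) → (I → S) → ℝ) {x y : I → S}
    (h : ∀ k, k ≠ j → x k = y k) : F x y ≤ siteSup j F :=
  le_ciSup (f := fun p : {p : (I → S) × (I → S) // ∀ k, k ≠ j → p.1 k = p.2 k} =>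
    F p.1.1 p.1.2) (Set.finite_range _).bddAbove ⟨(x, y), h⟩

lemma siteSup_le {j : I} {F : (I → S) → (I → S) → ℝ} {b : ℝ}
    (h : ∀ x y, (∀ k, k ≠ j → x k = y k) → F x y ≤ b) (hb : 0 ≤ b) : siteSup j F ≤ b :=
  Real.iSup_le (fun p => h _ _ p.2) hb

lemma siteSup_nonneg (j : I) {F : (I → S) → (I → S) → ℝ} (h : ∀ x y, 0 ≤ F x y) :
    0 ≤ siteSup j F :=
  Real.iSup_nonneg fun _ => h _ _

noncomputable def osc (j : I) (g : (I → S) → ℝ) : ℝ :=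
  siteSup j fun x y => |g x - g y|

noncomputable def totalOsc [Fintype I] (g : (I → S) → ℝ) : ℝ :=
  ∑ j, osc j g

lemma abs_sub_le_osc [Finite I] [Finite S] (j : I) (g : (I → S) → ℝ) {x y : I → S}
    (h : ∀ k, k ≠ j → x k = y k) : |g x - g y| ≤ osc j g :=
  le_siteSup (fun x y => |g x - g y|) h

lemma osc_nonneg (j : I) (g : (I → S) → ℝ) : 0 ≤ osc j g :=
  siteSup_nonneg j fun _ _ => abs_nonneg _

lemma totalOsc_nonneg [Fintype I] (g : (I → S) → ℝ) : 0 ≤ totalOsc g :=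
  sum_nonneg fun j _ => osc_nonneg j g

lemma abs_sub_le_sum_osc [Finite I] [Finite S] [DecidableEq I] (g : (I → S) → ℝ) (J : Finset I)
    {x y : I → S} (h : ∀ k, k ∉ J → x k = y k) : |g x - g y| ≤ ∑ j ∈ J, osc j g := by
  induction J using Finset.induction_on generalizing x with
  | empty =>
    obtain rfl : x = y := funext fun k => h k (notMem_empty k)
    simp
  | @insert j J hj ih =>
    set x' := Function.update x j (y j)
    have hx' : ∀ k, k ≠ j → x k = x' k := fun k hk => (Function.update_of_ne hk _ _).symm
    have hx'y : ∀ k, k ∉ J → x' k = y k := by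
      intro k hk
      rcases eq_or_ne k j with rfl | hkj
      · exact Function.update_self ..
      · simp only [x', Function.update_of_ne hkj]
        exact h k (by simp [hkj, hk])
    calc |g x - g y| ≤ |g x - g x'| + |g x' - g y| := abs_sub_le _ _ _
      _ ≤ osc j g + ∑ i ∈ J, osc i g := add_le_add (abs_sub_le_osc j g hx') (ih hx'y)
      _ = ∑ i ∈ insert j J, osc i g := (sum_insert (f := (osc · g)) hj).symm

lemma abs_sub_le_totalOsc [Fintype I] [Finite S] [DecidableEq I] (g : (I → S) → ℝ)
    (x y : I → S) :
    |g x - g y| ≤ totalOsc g :=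
  abs_sub_le_sum_osc g univ fun k hk => absurd (mem_univ k) hk

lemma abs_dotProduct_sub_dotProduct_le_totalOsc [Fintype I] [Fintype S] [DecidableEq I]
    {μ ν : (I → S) → ℝ} (hμ : IsDist μ) (hν : IsDist ν) (g : (I → S) → ℝ) :
    |μ ⬝ᵥ g - ν ⬝ᵥ g| ≤ totalOsc g :=
  calc |μ ⬝ᵥ g - ν ⬝ᵥ g| ≤ tvDist μ ν * totalOsc g :=
        abs_dotProduct_sub_dotProduct_le hμ hν (abs_sub_le_totalOsc g)
    _ ≤ 1 * totalOsc g := mul_le_mul_of_nonneg_right (tvDist_le_one hμ hν) (totalOsc_nonneg g)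
    _ = totalOsc g := one_mul _

end Oscillation

lemma iter_dotProduct {Ω : Type*} [Fintype Ω] (K : Ω → Ω → ℝ) (t : ℕ) (μ g : Ω → ℝ) :
    iter K t μ ⬝ᵥ g = μ ⬝ᵥ (K *ᵥ ·)^[t] g := by
  induction t generalizing g with
  | zero => rfl
  | succ t ih =>
    rw [iter, Function.iterate_succ_apply', Function.iterate_succ_apply]
    exact (dotProduct_mulVec _ K g).symm.trans (ih (K *ᵥ g))

lemma update_eq_update {I S : Type*} [DecidableEq I] {i : I} {x y : I → S}
    (h : ∀ k, k ≠ i → x k = y k) (s : S) : Function.update x i s = Function.update y i s := by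
  funext k
  rcases eq_or_ne k i with rfl | hk
  · simp
  · simp [hk, h k hk]

section ConditionalDistribution

variable {I S : Type*} [Fintype I] [DecidableEq I] [Fintype S] (π : (I → S) → ℝ)

noncomputable def heatBath (i : I) (g : (I → S) → ℝ) (x : I → S) : ℝ :=
  ∑ s, condDist π i x s * g (Function.update x i s)

noncomputable def influence (i j : I) : ℝ :=
  siteSup j fun x y => tvDist (condDist π i x) (condDist π i y)

lemma influence_nonneg (i j : I) : 0 ≤ influence π i j := by
  refine siteSup_nonneg j fun x y => ?_
  simpa using abs_sum_sub_sum_le_tvDist (condDist π i x) (condDist π i y) ∅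

lemma sum_influence_le_totalInfluence (i : I) : ∑ j, influence π i j ≤ totalInfluence π :=
  le_ciSup (f := fun i => ∑ j, influence π i j) (Set.finite_range _).bddAbove i

lemma totalInfluence_nonneg : 0 ≤ totalInfluence π :=
  Real.iSup_nonneg fun i => sum_nonneg fun j _ => influence_nonneg π i j

variable {π}

lemma condDist_congr {i : I} {x y : I → S} (h : ∀ k, k ≠ i → x k = y k) :
    condDist π i x = condDist π i y := by
  unfold condDist
  simp only [update_eq_update h]

lemma heatBath_congr (g : (I → S) → ℝ) {i : I} {x y : I → S} (h : ∀ k, k ≠ i → x k = y k) :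
    heatBath π i g x = heatBath π i g y := by
  simp only [heatBath, condDist_congr h, update_eq_update h]

lemma isDist_condDist (hpos : ∀ x, 0 < π x) (i : I) (x : I → S) : IsDist (condDist π i x) := by
  have hZ : 0 < ∑ s, π (Function.update x i s) :=
    sum_pos (fun s _ => hpos _) ⟨x i, mem_univ _⟩
  exact ⟨fun s => div_nonneg (hpos _).le hZ.le, by simp only [condDist, ← sum_div, div_self hZ.ne']⟩

lemma abs_heatBath_sub_le (hpos : ∀ x, 0 < π x) (g : (I → S) → ℝ) {i j : I} (hij : i ≠ j)
    {x y : I → S} (hxy : ∀ k, k ≠ j → x k = y k) :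
    |heatBath π i g x - heatBath π i g y| ≤ osc j g + influence π i j * osc i g := by
  set μ := condDist π i x
  set ν := condDist π i y
  have hμ : IsDist μ := isDist_condDist hpos i x
  have hν : IsDist ν := isDist_condDist hpos i y
  set gy : S → ℝ := fun s => g (Function.update y i s)
  have hsplit : heatBath π i g x - heatBath π i g y
      = μ ⬝ᵥ (fun s => g (Function.update x i s) - gy s) + (μ ⬝ᵥ gy - ν ⬝ᵥ gy) := by
    simp only [heatBath, dotProduct, mul_sub, sum_sub_distrib, gy, μ, ν]
    ring
  have hchange_x : |μ ⬝ᵥ (fun s => g (Function.update x i s) - gy s)| ≤ osc j g := by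
    refine abs_dotProduct_le hμ fun s => abs_sub_le_osc j g fun k hk => ?_
    rcases eq_or_ne k i with rfl | hki
    · simp
    · simp [hki, hxy k hk]
  have hchange_dist : |μ ⬝ᵥ gy - ν ⬝ᵥ gy| ≤ influence π i j * osc i g :=
    (abs_dotProduct_sub_dotProduct_le hμ hν fun s s' =>
        abs_sub_le_osc i g fun k hk => by simp [hk]).trans
      (mul_le_mul_of_nonneg_right
        (le_siteSup (fun x y => tvDist (condDist π i x) (condDist π i y)) hxy) (osc_nonneg i g))
  rw [hsplit]
  exact (abs_add_le _ _).trans (add_le_add hchange_x hchange_dist)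

end ConditionalDistribution

section GibbsKernel

variable {I S : Type*} [Fintype I] [DecidableEq I] [Fintype S] [DecidableEq S]
  {π : (I → S) → ℝ}

lemma sum_ite_agree_off_eq_sum_update (w : I → S) (i : I) (F : (I → S) → ℝ) :
    ∑ z, (if ∀ j, j ≠ i → z j = w j then F z else 0) = ∑ s, F (Function.update w i s) := by
  have hupdate : ∀ z : I → S, (∀ j, j ≠ i → z j = w j) → Function.update w i (z i) = z :=
    fun z hz => Function.update_eq_iff.2 ⟨rfl, fun j hj => (hz j hj).symm⟩
  rw [← sum_filter]
  refine sum_nbij' (· i) (Function.update w i) (by simp) ?_ (fun z hz => ?_) (by simp)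
    (fun z hz => ?_)
  · intro s _
    simp +contextual [Function.update_of_ne]
  · exact hupdate z (mem_filter.1 hz).2
  · rw [hupdate z (mem_filter.1 hz).2]

lemma gibbsKernel_mulVec (g : (I → S) → ℝ) :
    gibbsKernel π *ᵥ g = fun x => (Fintype.card I : ℝ)⁻¹ * ∑ i, heatBath π i g x := by
  ext x
  simp only [mulVec, dotProduct, gibbsKernel, mul_assoc, sum_mul, ← mul_sum, ite_mul, zero_mul]
  rw [sum_comm]
  simp only [sum_ite_agree_off_eq_sum_update, Function.update_self, heatBath]

lemma sum_mul_ite_condDist (hpos : ∀ x, 0 < π x) (i : I) (y : I → S) :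
    ∑ x, π x * (if ∀ j, j ≠ i → y j = x j then condDist π i x (y i) else 0) = π y := by
  have hZ : 0 < ∑ s, π (Function.update y i s) :=
    sum_pos (fun s _ => hpos _) ⟨y i, mem_univ _⟩
  have hagree : ∀ s, ∀ k, k ≠ i → Function.update y i s k = y k :=
    fun s k hk => Function.update_of_ne hk _ _
  simp_rw [mul_ite, mul_zero, eq_comm (a := y _), sum_ite_agree_off_eq_sum_update, condDist_congr (hagree _)]
  simp only [condDist, Function.update_eq_self, ← sum_mul]
  field_simp

lemma vecMul_gibbsKernel [Nonempty I] (hpos : ∀ x, 0 < π x) : π ᵥ* gibbsKernel π = π := by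
  ext y
  simp only [vecMul, dotProduct, gibbsKernel, mul_sum]
  rw [sum_comm]
  simp only [mul_left_comm (π _), ← mul_sum, sum_mul_ite_condDist hpos, sum_const, card_univ,
    nsmul_eq_mul]
  field_simp

lemma osc_gibbsKernel_mulVec_le (hpos : ∀ x, 0 < π x) (g : (I → S) → ℝ) (j : I) :
    osc j (gibbsKernel π *ᵥ g) ≤ (Fintype.card I : ℝ)⁻¹ *
      ∑ i, ((if i = j then 0 else osc j g) + influence π i j * osc i g) := by
  have hbound : ∀ i, 0 ≤ (if i = j then 0 else osc j g) + influence π i j * osc i g :=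
    fun i => add_nonneg (by split_ifs <;> simp [osc_nonneg])
      (mul_nonneg (influence_nonneg π i j) (osc_nonneg i g))
  refine siteSup_le (fun x y hxy => ?_)
    (mul_nonneg (by positivity) (sum_nonneg fun i _ => hbound i))
  rw [gibbsKernel_mulVec, ← mul_sub, ← sum_sub_distrib, abs_mul, abs_of_nonneg (by positivity)]
  refine mul_le_mul_of_nonneg_left ((abs_sum_le_sum_abs _ _).trans (sum_le_sum fun i _ => ?_))
    (by positivity)
  split_ifs with hij
  · subst hij
    simpa [heatBath_congr g hxy] using hbound i
  · simpa using abs_heatBath_sub_le hpos g hij hxy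

lemma sum_ite_eq_zero_else_const [Nonempty I] (j : I) (a : ℝ) :
    ∑ i, (if i = j then 0 else a) = ((Fintype.card I : ℝ) - 1) * a := by
  rw [sum_ite, sum_const_zero, zero_add, sum_const, filter_ne', card_erase_of_mem (mem_univ _),
    card_univ, nsmul_eq_mul, Nat.cast_pred Fintype.card_pos]

lemma totalOsc_gibbsKernel_mulVec_le [Nonempty I] (hpos : ∀ x, 0 < π x) (g : (I → S) → ℝ) :
    totalOsc (gibbsKernel π *ᵥ g)
      ≤ (1 - (1 - totalInfluence π) / Fintype.card I) * totalOsc g := by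
  set c : ℝ := (Fintype.card I : ℝ)
  have hc : 0 < c := by positivity
  have hinfluence : ∑ j, ∑ i, influence π i j * osc i g ≤ totalInfluence π * totalOsc g := by
    rw [sum_comm, totalOsc, mul_sum]
    exact sum_le_sum fun i _ => by
      rw [← sum_mul]
      exact mul_le_mul_of_nonneg_right (sum_influence_le_totalInfluence π i) (osc_nonneg i g)
  calc totalOsc (gibbsKernel π *ᵥ g)
      ≤ ∑ j, c⁻¹ * ∑ i, ((if i = j then 0 else osc j g) + influence π i j * osc i g) :=
        sum_le_sum fun j _ => osc_gibbsKernel_mulVec_le hpos g j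
    _ = c⁻¹ * ((c - 1) * totalOsc g + ∑ j, ∑ i, influence π i j * osc i g) := by
        simp only [← mul_sum, sum_add_distrib, sum_ite_eq_zero_else_const, totalOsc, c]
    _ ≤ c⁻¹ * ((c - 1) * totalOsc g + totalInfluence π * totalOsc g) := by gcongr
    _ = (1 - (1 - totalInfluence π) / c) * totalOsc g := by
        field_simp
        ring

lemma totalOsc_iterate_gibbsKernel_mulVec_le [Nonempty I] (hpos : ∀ x, 0 < π x)
    (g : (I → S) → ℝ) (t : ℕ) :
    totalOsc ((gibbsKernel π *ᵥ ·)^[t] g)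
      ≤ (1 - (1 - totalInfluence π) / Fintype.card I) ^ t * totalOsc g := by
  have hrate : 0 ≤ 1 - (1 - totalInfluence π) / Fintype.card I := by
    have hc : (1 : ℝ) ≤ Fintype.card I := by exact_mod_cast Fintype.card_pos
    have := totalInfluence_nonneg π
    rw [sub_nonneg, div_le_one (by positivity)]
    linarith
  induction t with
  | zero => simp
  | succ t ih =>
    rw [Function.iterate_succ_apply', pow_succ', mul_assoc]
    exact (totalOsc_gibbsKernel_mulVec_le hpos _).trans (mul_le_mul_of_nonneg_left ih hrate)

lemma dotProduct_iterate_gibbsKernel_mulVec [Nonempty I] (hpos : ∀ x, 0 < π x)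
    (g : (I → S) → ℝ) (t : ℕ) : π ⬝ᵥ (gibbsKernel π *ᵥ ·)^[t] g = π ⬝ᵥ g := by
  rw [← iter_dotProduct, iter, Function.iterate_fixed (vecMul_gibbsKernel hpos)]

end GibbsKernel

lemma sum_eq_dotProduct_indicator {Ω : Type*} [Fintype Ω] [DecidableEq Ω] (μ : Ω → ℝ)
    (A : Finset Ω) : ∑ x ∈ A, μ x = μ ⬝ᵥ fun x => if x ∈ A then 1 else 0 := by
  simp [dotProduct, mul_ite, sum_ite_mem]

lemma totalOsc_indicator_le {n : ℕ} {S : Type*} [Fintype S] [DecidableEq S]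
    {A : Finset (Fin n → S)} {J : Finset (Fin n)} (hA : SparseDependsOn A J) :
    totalOsc (fun x => if x ∈ A then (1 : ℝ) else 0) ≤ J.card := by
  have hosc : ∀ j, osc j (fun x => if x ∈ A then (1 : ℝ) else 0) ≤ if j ∈ J then 1 else 0 := by
    intro j
    refine siteSup_le (fun x y hxy => ?_) (by split_ifs <;> norm_num)
    split_ifs with hj
    · by_cases hx : x ∈ A <;> by_cases hy : y ∈ A <;> simp [hx, hy]
    · have hxy' : x ∈ A ↔ y ∈ A := hA x y fun i hi => hxy i (ne_of_mem_of_not_mem hi hj)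
      simp [hxy']
  calc totalOsc (fun x => if x ∈ A then (1 : ℝ) else 0) ≤ ∑ j, if j ∈ J then (1 : ℝ) else 0 :=
        sum_le_sum fun j _ => hosc j
    _ = J.card := by simp

lemma one_sub_pow_mul_le {δ a ε : ℝ} {t : ℕ} (hδ : 0 < δ) (hδ₁ : δ ≤ 1) (ha : 0 ≤ a)
    (hε : 0 < ε) (ht : δ⁻¹ * Real.log (a / ε) ≤ t) : (1 - δ) ^ t * a ≤ ε := by
  rcases ha.eq_or_lt with rfl | ha
  · simpa using hε.le
  have hlog : Real.log (a / ε) ≤ δ * t := by rwa [inv_mul_le_iff₀ hδ] at ht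
  calc (1 - δ) ^ t * a ≤ Real.exp (-δ) ^ t * a := by
        gcongr
        exact Real.one_sub_le_exp_neg δ
    _ = Real.exp (-(δ * t)) * a := by rw [← Real.exp_nat_mul]; ring_nf
    _ ≤ Real.exp (-Real.log (a / ε)) * a := by gcongr
    _ = ε := by rw [Real.exp_neg, Real.exp_log (by positivity)]; field_simp

end GibbsSampler

open GibbsSampler in
/-- for sequential Gibbs sampling on an `n`-variable distribution `π`
satisfying Dobrushin's condition `α < 1`, the `ω`-sparse estimation time satisfies
`t_{SE(ω)}(ε) ≤ ⌈(n/(1−α))·log(ω/ε)⌉`: for `t` at least this value and any initial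
distribution `μ₀`, `‖P^{(t)} μ₀ − π‖_{SV(ω)} ≤ ε`. -/
theorem gibbs_sparse_estimation_time_dobrushin {n : ℕ} (hn : 0 < n)
    {S : Type*} [Fintype S] [DecidableEq S]
    (π : (Fin n → S) → ℝ) (hπ : IsDist π) (hpos : ∀ x, 0 < π x)
    (hα : totalInfluence π < 1)
    (ω : ℕ) (ε : ℝ) (hε : 0 < ε) (t : ℕ)
    (ht : (n : ℝ) / (1 - totalInfluence π) * Real.log (ω / ε) ≤ t)
    (μ0 : (Fin n → S) → ℝ) (hμ0 : IsDist μ0) :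
    svDist (iter (gibbsKernel π) t μ0) π ω ≤ ε := by
  have : Nonempty (Fin n) := ⟨⟨0, hn⟩⟩
  set δ := (1 - totalInfluence π) / n
  have hδ : 0 < δ := div_pos (by linarith) (by exact_mod_cast hn)
  have hδ₁ : δ ≤ 1 := div_le_one_of_le₀ (by linarith [totalInfluence_nonneg π,
    (show (1 : ℝ) ≤ n by exact_mod_cast hn)]) (by positivity)
  refine Real.iSup_le (fun ⟨A, J, hJ, hA⟩ => ?_) hε.le
  set f : (Fin n → S) → ℝ := fun x => if x ∈ A then 1 else 0
  set g := (gibbsKernel π *ᵥ ·)^[t] f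
  calc |∑ x ∈ A, iter (gibbsKernel π) t μ0 x - ∑ x ∈ A, π x| = |μ0 ⬝ᵥ g - π ⬝ᵥ g| := by
        rw [sum_eq_dotProduct_indicator, sum_eq_dotProduct_indicator, iter_dotProduct,
          dotProduct_iterate_gibbsKernel_mulVec hpos]
    _ ≤ totalOsc g := abs_dotProduct_sub_dotProduct_le_totalOsc hμ0 hπ g
    _ ≤ (1 - δ) ^ t * totalOsc f := by
        simpa using totalOsc_iterate_gibbsKernel_mulVec_le hpos f t
    _ ≤ (1 - δ) ^ t * ω := by
        gcongr
        exact (totalOsc_indicator_le hA).trans (by exact_mod_cast hJ)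
    _ ≤ ε := one_sub_pow_mul_le hδ hδ₁ (Nat.cast_nonneg ω) hε (by rwa [inv_div])
end

section
/- Fix constants 0 ≤ α < 1 and τ* ≥ 0, and n ≥ 1 an integer. Set r = (1−α)/(n + ατ*). Then 0 < r ≤ 1/n, and exp(r)·(1 − 1/n + α/n + rατ*/n) ≤ 1. -/
/-- with `r = (1−α)/(n + ατ*)` for `0 ≤ α < 1`, `τ* ≥ 0`, `n ≥ 1`, we have
`0 < r ≤ 1/n` and `exp(r)·(1 − 1/n + α/n + rατ*/n) ≤ 1`. -/
theorem hogwild_contraction_rate (α τs : ℝ) (n : ℕ)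
    (hα0 : 0 ≤ α) (hα1 : α < 1) (hτ : 0 ≤ τs) (hn : 1 ≤ n) :
    0 < (1 - α) / (n + α * τs) ∧
    (1 - α) / (n + α * τs) ≤ 1 / n ∧
    Real.exp ((1 - α) / (n + α * τs)) *
        (1 - 1 / n + α / n + (1 - α) / (n + α * τs) * α * τs / n) ≤ 1 := by
  have hn' : (1 : ℝ) ≤ (n : ℝ) := by exact_mod_cast hn
  have hnpos : (0 : ℝ) < n := lt_of_lt_of_le one_pos hn'
  have hden : (0 : ℝ) < (n : ℝ) + α * τs :=
    lt_of_lt_of_le hnpos (le_add_of_nonneg_right (mul_nonneg hα0 hτ))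
  set r := (1 - α) / ((n : ℝ) + α * τs) with hr
  have hrpos : 0 < r := div_pos (by linarith) hden
  have hrle : r ≤ 1 / n := by
    rw [hr, div_le_div_iff₀ hden hnpos]
    nlinarith [mul_nonneg hα0 hτ]
  refine ⟨hrpos, hrle, ?_⟩
  have hkey : 1 - 1 / (n : ℝ) + α / n + r * α * τs / n = 1 - r := by
    rw [hr]; field_simp; ring
  rw [hkey]
  have h1 : 1 - r ≤ Real.exp (-r) := by
    have := Real.add_one_le_exp (-r); linarith
  calc Real.exp r * (1 - r) ≤ Real.exp r * Real.exp (-r) :=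
        mul_le_mul_of_nonneg_left h1 (Real.exp_pos r).le
    _ = 1 := by rw [← Real.exp_add]; simp
end
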